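/- Let b_0 = b_1 = 1, b_{2k} = b_{2k+1} = 4^{−k}·binomial(2k,k), and C_6(x) = Σ_{k=0}^{6} (−1)^k b_k cos(kx). Then there exists x ∈ (5π/8, π) such that C_6(x) < (820/33)(1 − cos(x/10)). -/

import Mathlib

/-!
The witness is `x = 483/200`, near the minimum of the difference of the two sides on
`(5π/8, π)`; there `C6 x ≈ 0.7168` while the right-hand side is `≈ 0.7211`.
Via `cos ((n + 2) x) = 2 cos x cos ((n + 1) x) - cos (n x)`, `C6 x` is a sextic polynomial
in `c = cos x`, and on the window `-0.7476 ≤ c ≤ -0.7474` it stays below `0.717`. That window,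
and the bound on `cos (x/10)`, come from the Maclaurin partial sums of `cos`, which lie
alternately above and below `cos` on `[0, ∞)`: integrating such a bound for `cos` gives one
for `sin`, and integrating that gives the next one for `cos`.
-/

open Real

noncomputable def b (k : ℕ) : ℝ := (Nat.choose (2*(k/2)) (k/2) : ℝ) / 4^(k/2)

noncomputable def C6 (x : ℝ) : ℝ :=
  ∑ k ∈ Finset.range 7, (-1)^k * b k * cos (k * x)

open Finset Nat

lemma cos_nat_add_two_mul (n : ℕ) (x : ℝ) :
    cos ((n + 2 : ℕ) * x) = 2 * cos x * cos ((n + 1 : ℕ) * x) - cos (n * x) := by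
  have h₁ := cos_add ((n + 1 : ℕ) * x) x
  have h₂ := cos_sub ((n + 1 : ℕ) * x) x
  push_cast at *
  rw [show ((n : ℝ) + 2) * x = (n + 1) * x + x by ring, show (n : ℝ) * x = (n + 1) * x - x by ring]
  linarith

lemma C6_eq_poly_cos (x : ℝ) :
    C6 x = 10 * cos x ^ 6 - 6 * cos x ^ 5 - 12 * cos x ^ 4 + 11 / 2 * cos x ^ 3
      + 29 / 8 * cos x ^ 2 - 11 / 8 * cos x + 9 / 16 := by
  simp only [C6, sum_range_succ, sum_range_zero, cos_nat_add_two_mul, b]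
  norm_num [Nat.choose]
  ring

lemma C6_le_of_cos_mem_Icc {x : ℝ} (hx : cos x ∈ Set.Icc (-0.7476) (-0.7474)) :
    C6 x ≤ 0.717 := by
  obtain ⟨hlo, hhi⟩ := hx
  have h₀ : 0 ≤ cos x + 0.7476 := by linarith
  have h₁ : cos x + 0.7476 ≤ 0.0002 := by linarith
  rw [C6_eq_poly_cos]
  -- Taylor-expand in `cos x + 0.7476`, whose powers lie in `[0, 0.0002 ^ k]`.
  linarith [pow_le_pow_left₀ h₀ h₁ 2, pow_le_pow_left₀ h₀ h₁ 3, pow_le_pow_left₀ h₀ h₁ 4,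
    pow_le_pow_left₀ h₀ h₁ 5, pow_le_pow_left₀ h₀ h₁ 6, pow_nonneg h₀ 2, pow_nonneg h₀ 3,
    pow_nonneg h₀ 4, pow_nonneg h₀ 5, pow_nonneg h₀ 6]

noncomputable def cosTaylor (n : ℕ) (t : ℝ) : ℝ :=
  ∑ k ∈ range n, (-1) ^ k * (t ^ (2 * k) / (2 * k)!)

noncomputable def sinTaylor (n : ℕ) (t : ℝ) : ℝ :=
  ∑ k ∈ range n, (-1) ^ k * (t ^ (2 * k + 1) / (2 * k + 1)!)

lemma hasDerivAt_pow_succ_div_factorial (m : ℕ) (t : ℝ) :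
    HasDerivAt (fun s : ℝ ↦ s ^ (m + 1) / (m + 1)!) (t ^ m / m !) t := by
  refine ((hasDerivAt_pow (m + 1) t).div_const _).congr_deriv ?_
  rw [factorial_succ]
  push_cast
  field_simp

lemma hasDerivAt_sinTaylor (n : ℕ) (t : ℝ) : HasDerivAt (sinTaylor n) (cosTaylor n t) t :=
  HasDerivAt.fun_sum fun k _ ↦ (hasDerivAt_pow_succ_div_factorial (2 * k) t).const_mul _

lemma cosTaylor_succ (n : ℕ) (t : ℝ) :
    cosTaylor (n + 1) t = 1 - ∑ k ∈ range n, (-1) ^ k * (t ^ (2 * k + 2) / (2 * k + 2)!) := by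
  simp [cosTaylor, sum_range_succ', mul_add, sub_eq_add_neg, ← sum_neg_distrib, pow_succ, add_comm]

lemma hasDerivAt_cosTaylor_succ (n : ℕ) (t : ℝ) :
    HasDerivAt (cosTaylor (n + 1)) (-sinTaylor n t) t := by
  have h := (HasDerivAt.fun_sum fun k (_ : k ∈ range n) ↦
    (hasDerivAt_pow_succ_div_factorial (2 * k + 1) t).const_mul ((-1 : ℝ) ^ k)).const_sub 1
  rw [funext (cosTaylor_succ n)]
  simpa [sinTaylor] using h

lemma cosTaylor_abs (n : ℕ) (t : ℝ) : cosTaylor n |t| = cosTaylor n t := by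
  simp [cosTaylor, pow_mul]

lemma monotoneOn_Ici_of_hasDerivAt_nonneg {f f' : ℝ → ℝ} {a : ℝ}
    (hf : ∀ t, HasDerivAt f (f' t) t) (hf' : ∀ t, a < t → 0 ≤ f' t) :
    MonotoneOn f (Set.Ici a) :=
  monotoneOn_of_hasDerivWithinAt_nonneg (convex_Ici a)
    (fun t _ ↦ (hf t).continuousAt.continuousWithinAt) (fun t _ ↦ (hf t).hasDerivWithinAt)
    (fun t ht ↦ hf' t (by simpa using ht))

lemma sinTaylor_alternating {n : ℕ}
    (hcos : ∀ s, 0 ≤ s → 0 ≤ (-1) ^ n * (cosTaylor (n + 1) s - cos s)) {t : ℝ} (ht : 0 ≤ t) :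
    0 ≤ (-1) ^ n * (sinTaylor (n + 1) t - sin t) := by
  have hmono := monotoneOn_Ici_of_hasDerivAt_nonneg
    (fun s ↦ ((hasDerivAt_sinTaylor (n + 1) s).sub (hasDerivAt_sin s)).const_mul ((-1 : ℝ) ^ n))
    (fun s hs ↦ hcos s hs.le)
  simpa [sinTaylor] using hmono Set.self_mem_Ici ht ht

theorem cosTaylor_alternating (n : ℕ) {t : ℝ} (ht : 0 ≤ t) :
    0 ≤ (-1) ^ n * (cosTaylor (n + 1) t - cos t) := by
  induction n generalizing t with
  | zero => simpa [cosTaylor] using cos_le_one t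
  | succ n ih =>
    have hmono := monotoneOn_Ici_of_hasDerivAt_nonneg
      (fun s ↦ ((hasDerivAt_cosTaylor_succ (n + 1) s).sub (hasDerivAt_cos s)).const_mul
        ((-1 : ℝ) ^ (n + 1)))
      (fun s hs ↦ by
        have := sinTaylor_alternating (fun s hs ↦ ih hs) hs.le
        rw [pow_succ]
        linarith)
    simpa [cosTaylor_succ] using hmono Set.self_mem_Ici ht ht

theorem cos_le_cosTaylor (n : ℕ) (t : ℝ) : cos t ≤ cosTaylor (2 * n + 1) t := by
  have h := cosTaylor_alternating (2 * n) (abs_nonneg t)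
  rw [cosTaylor_abs, cos_abs, pow_mul] at h
  simpa using h

theorem cosTaylor_le_cos (n : ℕ) (t : ℝ) : cosTaylor (2 * n + 2) t ≤ cos t := by
  have h := cosTaylor_alternating (2 * n + 1) (abs_nonneg t)
  rw [cosTaylor_abs, cos_abs, pow_succ, pow_mul] at h
  simpa using h

theorem lemma7_fails_n6 : ∃ x ∈ Set.Ioo (5 * π / 8) π,
    C6 x < (820/33) * (1 - cos (x/10)) := by
  refine ⟨483 / 200, ⟨by linarith [pi_lt_d2], by linarith [pi_gt_three]⟩, ?_⟩
  have hlo := cosTaylor_le_cos 2 (483 / 200)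
  have hhi := cos_le_cosTaylor 3 (483 / 200)
  have hrhs := cos_le_cosTaylor 1 (483 / 200 / 10)
  norm_num [cosTaylor, sum_range_succ, factorial] at hlo hhi hrhs ⊢
  have hC6 := C6_le_of_cos_mem_Icc (x := 483 / 200) ⟨by linarith, by linarith⟩
  linarith
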